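/- arXiv:2001.06050 — 9 statements merged into one kernel-verified Lean document; each statement's English description precedes it below -/
import Mathlib

section
/- A topological space X is compact if and only if for every topological space Z and every open set W ⊆ Z × X, the set {z ∈ Z | ∀ x ∈ X, (z, x) ∈ W} is open in Z. -/
universe u

/-- Topology on `Option X` where points of `X` are isolated and neighborhoods of
`none` are given by the filter `F`. -/
def mkTop {X : Type u} (F : Ultrafilter X) : TopologicalSpace (Option X) where
  IsOpen U := none ∈ U → Option.some ⁻¹' U ∈ F
  isOpen_univ := fun _ => Filter.univ_mem
  isOpen_inter := fun s t hs ht h =>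
    Filter.inter_mem (hs h.1) (ht h.2)
  isOpen_sUnion := fun S hS h => by
    obtain ⟨t, htS, hnt⟩ := h
    exact Filter.mem_of_superset (hS t htS hnt)
      (fun x hx => ⟨t, htS, hx⟩)

theorem stmt0 {X : Type u} [TopologicalSpace X] :
    CompactSpace X ↔
      ∀ (Z : Type u) [TopologicalSpace Z] (W : Set (Z × X)), IsOpen W →
        IsOpen {z : Z | ∀ x : X, (z, x) ∈ W} := by
  constructor
  · intro hX Z _ W hW
    have h : IsClosed (Prod.fst '' Wᶜ) :=
      isClosedMap_fst_of_compactSpace _ hW.isClosed_compl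
    have : {z : Z | ∀ x : X, (z, x) ∈ W} = (Prod.fst '' Wᶜ)ᶜ := by
      ext z
      simp only [Set.mem_setOf_eq, Set.mem_compl_iff, Set.mem_image, Prod.exists]
      constructor
      · rintro h ⟨z', x, hzx, rfl⟩
        exact hzx (h x)
      · intro h x
        by_contra hx
        exact h ⟨z, x, hx, rfl⟩
    rw [this]
    exact h.isOpen_compl
  · intro H
    rw [← isCompact_univ_iff, isCompact_iff_ultrafilter_le_nhds]
    intro F _
    by_contra hF
    push_neg at hF
    letI τ : TopologicalSpace (Option X) := mkTop F
    set D : Set (Option X × X) := {p | p.1 = some p.2} with hD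
    have key : ∀ x : X, (none, x) ∉ closure D := by
      intro x hx
      obtain ⟨U, hUF, hUnhds⟩ : ∃ U, U ∉ F ∧ U ∈ nhds x := by
        have := hF x (Set.mem_univ x)
        rw [Filter.le_def] at this
        push_neg at this
        obtain ⟨U, hU1, hU2⟩ := this
        exact ⟨U, hU2, hU1⟩
      obtain ⟨V, hVU, hVopen, hxV⟩ := mem_nhds_iff.mp hUnhds
      have hVcF : Vᶜ ∈ F := by
        have : V ∉ F := fun h => hUF (Filter.mem_of_superset h hVU)
        exact (Ultrafilter.compl_mem_iff_notMem).mpr this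
      have hO : IsOpen ((Option.some '' Vᶜ ∪ {none}) ×ˢ V) := by
        apply IsOpen.prod
        · intro _
          refine Filter.mem_of_superset hVcF ?_
          intro y hy
          exact Or.inl ⟨y, hy, rfl⟩
        · exact hVopen
      have hmem : ((none : Option X), x) ∈ (Option.some '' Vᶜ ∪ {none}) ×ˢ V :=
        ⟨Or.inr rfl, hxV⟩
      obtain ⟨⟨z, y⟩, ⟨⟨hz, hy⟩, hzy⟩⟩ :=
        (mem_closure_iff.mp hx) _ hO hmem
      simp only [hD, Set.mem_setOf_eq] at hzy
      rcases hz with ⟨y', hy', hy'z⟩ | hz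
      · have : y' = y := Option.some_injective _ (by simpa [hzy] using hy'z)
        rw [this] at hy'
        exact hy' hy
      · rw [Set.mem_singleton_iff] at hz
        simp [hzy] at hz
    have hS : IsOpen {z : Option X | ∀ x : X, (z, x) ∈ (closure D)ᶜ} :=
      H (Option X) (closure D)ᶜ (isClosed_closure.isOpen_compl)
    have hnone : (none : Option X) ∈ {z : Option X | ∀ x : X, (z, x) ∈ (closure D)ᶜ} :=
      fun x => key x
    have hpre : Option.some ⁻¹' {z : Option X | ∀ x : X, (z, x) ∈ (closure D)ᶜ} ∈ F :=
      hS hnone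
    obtain ⟨a, ha⟩ := Filter.nonempty_of_mem hpre
    have : ((some a : Option X), a) ∈ (closure D)ᶜ := ha a
    exact this (subset_closure (by simp [hD]))
end

section
/- If for every topological space Z, the intersection ⋂_{x ∈ X} V_x is open for every continuously indexed family {V_x | x ∈ X} of open sets of Z, then X is compact. -/
/-! The complement of `⋂ x, V x` is the projection to `Z` of the closed set
`{p | p.1 ∉ V p.2}`, so the hypothesis says exactly that `Z × X → Z` is a closed map for every `Z`.
By the Kuratowski–Mostowski theorem (a map is proper iff it is universally closed, applied to
`X → Unit`) this forces `X` to be compact. -/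

universe u

theorem isClosedMap_fst_of_isOpen_iInter_slice {Z X : Type*} [TopologicalSpace Z]
    [TopologicalSpace X]
    (h : ∀ W : Set (Z × X), IsOpen W → IsOpen (⋂ x : X, {z : Z | (z, x) ∈ W})) :
    IsClosedMap (Prod.fst : Z × X → Z) := by
  intro C hC
  have hcompl : (⋂ x : X, {z : Z | (z, x) ∈ Cᶜ}) = (Prod.fst '' C)ᶜ := by
    ext z
    simp
  rw [← isOpen_compl_iff, ← hcompl]
  exact h Cᶜ hC.isOpen_compl

theorem compactSpace_of_isClosedMap_fst {X : Type u} [TopologicalSpace X]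
    (h : ∀ (Z : Type u) [TopologicalSpace Z], IsClosedMap (Prod.fst : Z × X → Z)) :
    CompactSpace X := by
  have hproper : IsProperMap (fun _ : X ↦ ()) := by
    refine isProperMap_iff_universally_closed.mpr ⟨continuous_const, fun Z _ ↦ ?_⟩
    exact (Homeomorph.punitProd Z).symm.isClosedMap.comp
      ((h Z).comp (Homeomorph.prodComm X Z).isClosedMap)
  exact (isProperMap_const_iff ()).mp hproper

theorem stmt3 {X : Type u} [TopologicalSpace X]
    (h : ∀ (Z : Type u) [TopologicalSpace Z] (V : X → Set Z),
      (∀ x, IsOpen (V x)) → IsOpen {p : Z × X | p.1 ∈ V p.2} → IsOpen (⋂ x : X, V x)) :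
    CompactSpace X := by
  refine compactSpace_of_isClosedMap_fst fun Z _ ↦ isClosedMap_fst_of_isOpen_iInter_slice ?_
  intro W hW
  refine h Z (fun x ↦ {z | (z, x) ∈ W}) (fun x ↦ ?_) hW
  exact hW.preimage (continuous_id.prodMk continuous_const)
end

section
/- Let {Q_y | y ∈ Y} be a family of compact subsets of X such that for every open U ⊆ X the set {y ∈ Y | Q_y ⊆ U} is open in Y. Then for every topological space Z and every open W ⊆ Z × X, the set {(z, y) ∈ Z × Y | ∀ x ∈ Q_y, (z, x) ∈ W} is open in Z × Y. -/
theorem stmt4 {X Y Z : Type*} [TopologicalSpace X] [TopologicalSpace Y] [TopologicalSpace Z]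
    (Q : Y → Set X) (hQ : ∀ y, IsCompact (Q y))
    (hcont : ∀ U : Set X, IsOpen U → IsOpen {y : Y | Q y ⊆ U})
    (W : Set (Z × X)) (hW : IsOpen W) :
    IsOpen {p : Z × Y | ∀ x ∈ Q p.2, (p.1, x) ∈ W} := by
  rw [isOpen_iff_forall_mem_open]
  rintro ⟨z, y⟩ hzy
  obtain ⟨u, v, hu, hv, hzu, hQv, huv⟩ :=
    generalized_tube_lemma isCompact_singleton (hQ y) hW
      (by rintro ⟨a, b⟩ ⟨ha, hb⟩; rw [Set.mem_singleton_iff] at ha; subst ha; exact hzy b hb)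
  refine ⟨u ×ˢ {y' | Q y' ⊆ v}, ?_, hu.prod (hcont v hv), ⟨hzu rfl, hQv⟩⟩
  rintro ⟨z', y'⟩ ⟨hz', hy'⟩ x hx
  exact huv ⟨hz', hy' hx⟩
end

section
/- Let Q be a subset of a topological space X. If for every topological space Z and every open set W ⊆ Z × X, the set {z ∈ Z | {z} × Q ⊆ W} is open in Z, then Q is compact. -/
/-!
Let `f` be a nontrivial filter containing `Q`, and suppose no point of `Q` is a cluster point of
`f`. Adjoin to `X` a point `∞` whose neighbourhoods are the sets `{∞} ∪ V` with `V ∈ f`. The open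
set `W = ⋃_{V ∈ f} ({∞} ∪ V) × (closure V)ᶜ` contains `{∞} × Q`, so by hypothesis it contains
`N × Q` for some neighbourhood `N` of `∞`. Then `N` contains some `y ∈ Q`, and `(y, y) ∈ W`
forces `y ∈ V \ closure V` for some `V`, which is absurd.
-/

open Filter Set Topology

universe u

section OptionNhdsAdjoint

variable {X : Type*} {f : Filter X}

theorem isOpen_insert_none_image_some_nhdsAdjoint {V : Set X} (hV : V ∈ f) :
    IsOpen[nhdsAdjoint none (map some f)] (insert none (some '' V)) := fun _ ↦
  mem_map.2 <| mem_of_superset hV fun _ hy ↦ mem_insert_of_mem none (mem_image_of_mem some hy)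

theorem preimage_some_mem_of_isOpen_nhdsAdjoint {S : Set (Option X)}
    (hS : IsOpen[nhdsAdjoint none (map some f)] S) (hnone : none ∈ S) : some ⁻¹' S ∈ f :=
  hS hnone

end OptionNhdsAdjoint

theorem stmt5 {X : Type u} [TopologicalSpace X] (Q : Set X)
    (h : ∀ (Z : Type u) [TopologicalSpace Z] (W : Set (Z × X)), IsOpen W →
      IsOpen {z : Z | ∀ q ∈ Q, (z, q) ∈ W}) :
    IsCompact Q := by
  intro f _ hfQ
  by_contra! hno
  let _ : TopologicalSpace (Option X) := nhdsAdjoint none (map some f)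
  set W : Set (Option X × X) := ⋃ V ∈ f, insert none (some '' V) ×ˢ (closure V)ᶜ
  have hW : IsOpen W := isOpen_biUnion fun V hV ↦
    (isOpen_insert_none_image_some_nhdsAdjoint hV).prod isClosed_closure.isOpen_compl
  have hnone : ∀ q ∈ Q, (none, q) ∈ W := fun q hq ↦ by
    obtain ⟨V, hV, hqV⟩ := not_forall₂.1 (mt clusterPt_iff_forall_mem_closure.2 (hno q hq))
    exact mem_biUnion hV ⟨mem_insert _ _, hqV⟩
  obtain ⟨y, hyW, hyQ⟩ := Filter.nonempty_of_mem <|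
    inter_mem (preimage_some_mem_of_isOpen_nhdsAdjoint (h _ W hW) hnone) (le_principal_iff.1 hfQ)
  obtain ⟨V, -, hyV, hyV'⟩ := mem_iUnion₂.1 (hyW y hyQ)
  simp only [mem_insert_iff, reduceCtorEq, (Option.some_injective X).mem_set_image,
    false_or] at hyV
  exact hyV' (subset_closure hyV)
end

section
/- A subset Q of a topological space X is compact if and only if for every topological space Z and every open set W ⊆ Z × X, the set {z ∈ Z | ∀ q ∈ Q, (z, q) ∈ W} is open in Z. -/
/-!
The forward direction is the generalized tube lemma. Conversely, taking complements, the hypothesis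
says that the projection `Q × Z → Z` maps closed sets to closed sets for every `Z`; a space whose
map to a point is universally closed in this sense is compact, by Bourbaki's characterization of
proper maps (`isProperMap_iff_universally_closed`).
-/

universe u

theorem IsCompact.isOpen_setOf_forall_mem {Z X : Type*} [TopologicalSpace Z] [TopologicalSpace X]
    {Q : Set X} (hQ : IsCompact Q) {W : Set (Z × X)} (hW : IsOpen W) :
    IsOpen {z : Z | ∀ q ∈ Q, (z, q) ∈ W} :=
  isOpen_iff_mem_nhds.mpr fun _ hz ↦
    hQ.eventually_forall_of_forall_eventually fun q hq ↦ hW.mem_nhds (hz q hq)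

theorem isClosedMap_snd_of_forall_isOpen_setOf_forall_mem {Z X : Type*} [TopologicalSpace Z]
    [TopologicalSpace X] {Q : Set X}
    (h : ∀ W : Set (Z × X), IsOpen W → IsOpen {z : Z | ∀ q ∈ Q, (z, q) ∈ W}) :
    IsClosedMap (Prod.snd : Q × Z → Z) := by
  intro C hC
  obtain ⟨C', hC', rfl⟩ :=
    (Topology.IsInducing.subtypeVal.prodMap .id).isClosed_iff.mp hC
  have hW : IsOpen {p : Z × X | (p.2, p.1) ∉ C'} := (hC'.preimage continuous_swap).isOpen_compl
  refine isOpen_compl_iff.mp ?_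
  convert h _ hW using 1
  ext z
  simp

theorem compactSpace_of_forall_isClosedMap_snd {Y : Type u} [TopologicalSpace Y]
    (h : ∀ (Z : Type u) [TopologicalSpace Z], IsClosedMap (Prod.snd : Y × Z → Z)) :
    CompactSpace Y := by
  refine (isProperMap_const_iff ()).mp <|
    isProperMap_iff_universally_closed.mpr ⟨continuous_const, fun Z _ ↦ ?_⟩
  exact (Homeomorph.punitProd Z).symm.isClosedMap.comp (h Z)

theorem stmt6 {X : Type u} [TopologicalSpace X] (Q : Set X) :
    IsCompact Q ↔
      ∀ (Z : Type u) [TopologicalSpace Z] (W : Set (Z × X)), IsOpen W →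
        IsOpen {z : Z | ∀ q ∈ Q, (z, q) ∈ W} := by
  refine ⟨fun hQ Z _ W hW ↦ hQ.isOpen_setOf_forall_mem hW, fun h ↦ ?_⟩
  rw [isCompact_iff_compactSpace]
  exact compactSpace_of_forall_isClosedMap_snd fun Z _ ↦
    isClosedMap_snd_of_forall_isOpen_setOf_forall_mem (h Z)
end

section
/- If the exponential object S^X of continuous maps from X to the Sierpinski space S exists as an exponential in the category of topological spaces, then X is compact if and only if the universal quantification functional A : S^X → S, defined by A(p) = ⊤ iff p(x) = ⊤ for all x ∈ X, is continuous. -/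
universe u

open Set

theorem stmt8 {X : Type u} [TopologicalSpace X]
    [τ : TopologicalSpace C(X, Prop)]
    (hev : Continuous fun p : C(X, Prop) × X => p.1 p.2)
    (htr : ∀ (Z : Type u) [TopologicalSpace Z] (g : Z → C(X, Prop)),
      Continuous (fun p : Z × X => g p.1 p.2) → Continuous g) :
    CompactSpace X ↔ Continuous fun p : C(X, Prop) => ∀ x : X, p x := by
  constructor
  · intro hX
    rw [continuous_Prop]
    have hW : IsOpen {q : C(X, Prop) × X | q.1 q.2} := continuous_Prop.mp hev
    rw [isOpen_iff_forall_mem_open]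
    intro p hp
    obtain ⟨u, v, hu, hv, hpu, hvu, huv⟩ :=
      generalized_tube_lemma isCompact_singleton isCompact_univ hW
        (by rintro ⟨q, x⟩ ⟨hq, -⟩
            simp only [mem_singleton_iff] at hq
            subst hq
            exact hp x)
    exact ⟨u, fun q hq x => huv (show (q, x) ∈ u ×ˢ v from ⟨hq, hvu (mem_univ x)⟩), hu, hpu rfl⟩
  · intro hA
    have hU : IsOpen {p : C(X, Prop) | ∀ x, p x} := continuous_Prop.mp hA
    constructor
    rw [isCompact_iff_finite_subcover]
    intro ι U hUo hcov
    classical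
    set D : Set (Set X) := {V | ∃ t : Finset ι, V = ⋃ i ∈ t, U i} with hD
    have hDunion : ∀ A ∈ D, ∀ B ∈ D, A ∪ B ∈ D := by
      rintro A ⟨s, rfl⟩ B ⟨t, rfl⟩
      exact ⟨s ∪ t, by rw [Finset.set_biUnion_union]⟩
    have hDopen : ∀ V ∈ D, IsOpen V := by
      rintro V ⟨t, rfl⟩
      exact isOpen_biUnion fun i _ => hUo i
    let Zs : Set (Set X) := insert Set.univ D
    have hZopen : ∀ V : Zs, IsOpen (V : Set X) := by
      rintro ⟨V, hV⟩
      rcases hV with rfl | hV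
      · exact isOpen_univ
      · exact hDopen V hV
    letI tZ : TopologicalSpace Zs :=
      { IsOpen := fun 𝒰 => (∀ V W : Zs, V ∈ 𝒰 → (V : Set X) ⊆ W → W ∈ 𝒰) ∧
          ((∃ V ∈ 𝒰, (V : Set X) = Set.univ) → ∃ V ∈ 𝒰, (V : Set X) ∈ D)
        isOpen_univ := ⟨fun _ W _ _ => trivial, fun _ =>
          ⟨⟨∅, Or.inr ⟨∅, by simp⟩⟩, trivial, ⟨∅, by simp⟩⟩⟩
        isOpen_inter := by
          rintro 𝒰 𝒱 ⟨hu1, hu2⟩ ⟨hv1, hv2⟩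
          refine ⟨fun V W hV hVW => ⟨hu1 V W hV.1 hVW, hv1 V W hV.2 hVW⟩, ?_⟩
          rintro ⟨V, ⟨hVU, hVV⟩, hVuniv⟩
          obtain ⟨A, hAU, hAD⟩ := hu2 ⟨V, hVU, hVuniv⟩
          obtain ⟨B, hBV, hBD⟩ := hv2 ⟨V, hVV, hVuniv⟩
          have hABD : (A : Set X) ∪ B ∈ D := hDunion _ hAD _ hBD
          refine ⟨⟨(A : Set X) ∪ B, Or.inr hABD⟩, ⟨?_, ?_⟩, hABD⟩
          · exact hu1 A _ hAU subset_union_left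
          · exact hv1 B _ hBV subset_union_right
        isOpen_sUnion := by
          intro S hS
          refine ⟨fun V W hV hVW => ?_, ?_⟩
          · obtain ⟨𝒰, h𝒰, hV𝒰⟩ := hV
            exact ⟨𝒰, h𝒰, (hS 𝒰 h𝒰).1 V W hV𝒰 hVW⟩
          · rintro ⟨V, ⟨𝒰, h𝒰, hV𝒰⟩, hVuniv⟩
            obtain ⟨A, hA, hAD⟩ := (hS 𝒰 h𝒰).2 ⟨V, hV𝒰, hVuniv⟩
            exact ⟨A, ⟨𝒰, h𝒰, hA⟩, hAD⟩ }
    let g : Zs → C(X, Prop) := fun V =>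
      ⟨fun x => x ∈ (V : Set X), by rw [continuous_Prop]; exact hZopen V⟩
    have hgev : Continuous fun p : Zs × X => g p.1 p.2 := by
      rw [continuous_Prop, isOpen_iff_forall_mem_open]
      rintro ⟨V, x⟩ hx
      have hx' : x ∈ (V : Set X) := hx
      obtain ⟨W, hWD, hWV, hxW⟩ : ∃ W, W ∈ D ∧ W ⊆ (V : Set X) ∧ x ∈ W := by
        rcases V.2 with hV | hV
        · obtain ⟨i, hi⟩ := mem_iUnion.mp (hcov (mem_univ x))
          exact ⟨U i, ⟨{i}, by simp⟩, by rw [hV]; exact subset_univ _, hi⟩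
        · exact ⟨V, hV, subset_rfl, hx'⟩
      refine ⟨{V' : Zs | W ⊆ (V' : Set X)} ×ˢ W, ?_, ?_, ?_⟩
      · rintro ⟨V', y⟩ ⟨hV', hy⟩
        exact hV' hy
      · refine IsOpen.prod ?_ (hDopen W hWD)
        show (∀ _ _, _ → _ → _) ∧ _
        refine ⟨fun A B hA hAB => hA.trans hAB, ?_⟩
        rintro ⟨A, hA, -⟩
        refine ⟨⟨W, Or.inr hWD⟩, ?_, hWD⟩
        exact (subset_rfl : W ⊆ W)
      · exact ⟨hWV, hxW⟩
    have hg : Continuous g := htr Zs g hgev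
    have hUopen : IsOpen (g ⁻¹' {p : C(X, Prop) | ∀ x, p x}) := hU.preimage hg
    have huniv : (⟨Set.univ, Or.inl rfl⟩ : Zs) ∈ g ⁻¹' {p : C(X, Prop) | ∀ x, p x} :=
      fun x => mem_univ x
    have hUopen' : (∀ V W : Zs, V ∈ _ → (V : Set X) ⊆ W → W ∈ _) ∧
        ((∃ V ∈ g ⁻¹' {p : C(X, Prop) | ∀ x, p x}, (V : Set X) = Set.univ) →
          ∃ V ∈ g ⁻¹' {p : C(X, Prop) | ∀ x, p x}, (V : Set X) ∈ D) := hUopen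
    obtain ⟨V, hVmem, t, ht⟩ := hUopen'.2 ⟨_, huniv, rfl⟩
    refine ⟨t, fun x _ => ?_⟩
    have hxV : x ∈ (V : Set X) := hVmem x
    rwa [ht] at hxV
end

section
/- If X is compact and Y is discrete, and the exponential Y^X exists in the category of topological spaces, then Y^X is discrete. -/
/-!
Near any `(f, x)`, continuity of evaluation into the discrete space `Y` forces `g y = f x` and
`f y = f x`, hence `g y = f y`. Compactness of `X` turns these local statements into a single
neighbourhood of `f` on which every `g` agrees with `f` everywhere, so `{f}` is open.
-/

universe u

open Filter Topology

section ContinuousEval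

variable {F X Y : Type*} [FunLike F X Y] [TopologicalSpace F] [TopologicalSpace X]
  [TopologicalSpace Y] [DiscreteTopology Y]

theorem ContinuousEval.eventually_apply_eq [ContinuousEval F X Y] (f : F) (x : X) :
    ∀ᶠ p : F × X in 𝓝 (f, x), p.1 p.2 = f p.2 := by
  have hg : ∀ᶠ p : F × X in 𝓝 (f, x), p.1 p.2 = f x :=
    (continuous_fst.eval continuous_snd).continuousAt.eventually_mem
      (s := {f x}) (mem_nhds_discrete.2 rfl)
  have hf : ∀ᶠ p : F × X in 𝓝 (f, x), f p.2 = f x :=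
    (continuous_const.eval continuous_snd).continuousAt.eventually_mem
      (s := {f x}) (mem_nhds_discrete.2 rfl)
  filter_upwards [hg, hf] with p hpg hpf
  rw [hpg, hpf]

theorem ContinuousEval.discreteTopology [ContinuousEval F X Y] [CompactSpace X] :
    DiscreteTopology F := by
  refine discreteTopology_iff_singleton_mem_nhds.mpr fun f => ?_
  have hloc : ∀ᶠ g in 𝓝 f, ∀ x ∈ Set.univ, g x = f x :=
    isCompact_univ.eventually_forall_of_forall_eventually fun x _ => eventually_apply_eq f x
  filter_upwards [hloc] with g hg
  exact DFunLike.ext g f fun x => hg x trivial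

end ContinuousEval

theorem stmt9_general {X Y : Type u} [TopologicalSpace X] [TopologicalSpace Y]
    [CompactSpace X] [DiscreteTopology Y]
    [τ : TopologicalSpace C(X, Y)]
    (hev : Continuous fun p : C(X, Y) × X => p.1 p.2) :
    DiscreteTopology C(X, Y) :=
  have : ContinuousEval C(X, Y) X Y := ⟨hev⟩
  ContinuousEval.discreteTopology (X := X)

theorem stmt9 {X Y : Type u} [TopologicalSpace X] [TopologicalSpace Y]
    [CompactSpace X] [DiscreteTopology Y]
    [τ : TopologicalSpace C(X, Y)]
    (hev : Continuous fun p : C(X, Y) × X => p.1 p.2)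
    (htr : ∀ (Z : Type u) [TopologicalSpace Z] (g : Z → C(X, Y)),
      Continuous (fun p : Z × X => g p.1 p.2) → Continuous g) :
    DiscreteTopology C(X, Y) :=
  stmt9_general (τ := τ) hev
end

section
/- If the exponential Y^X exists in the category of topological spaces, Q ⊆ X is compact, and V ⊆ Y is open, then the set N(Q, V) = {f ∈ Y^X | f(Q) ⊆ V} is open in Y^X. -/
universe u

theorem stmt10 {X Y : Type u} [TopologicalSpace X] [TopologicalSpace Y]
    [τ : TopologicalSpace C(X, Y)]
    (hev : Continuous fun p : C(X, Y) × X => p.1 p.2)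
    (htr : ∀ (Z : Type u) [TopologicalSpace Z] (g : Z → C(X, Y)),
      Continuous (fun p : Z × X => g p.1 p.2) → Continuous g)
    (Q : Set X) (hQ : IsCompact Q) (V : Set Y) (hV : IsOpen V) :
    IsOpen {f : C(X, Y) | ∀ x ∈ Q, f x ∈ V} := by
  rw [isOpen_iff_mem_nhds]
  intro f hf
  have key : ∀ x ∈ Q, ∃ u ∈ nhds f, ∃ w ∈ nhds x, ∀ g ∈ u, ∀ y ∈ w, g y ∈ V := by
    intro x hx
    have h := hev.continuousAt (x := (f, x))
    have hmem : {p : C(X, Y) × X | p.1 p.2 ∈ V} ∈ nhds (f, x) :=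
      h (hV.mem_nhds (hf x hx))
    rw [nhds_prod_eq, Filter.mem_prod_iff] at hmem
    obtain ⟨u, hu, w, hw, hsub⟩ := hmem
    exact ⟨u, hu, w, hw, fun g hg y hy => hsub (Set.mk_mem_prod hg hy)⟩
  choose u hu w hw hvw using key
  obtain ⟨t, ht⟩ := hQ.elim_nhds_subcover' (fun x hx => w x hx) (fun x hx => hw x hx)
  have hmem : (⋂ x ∈ t, u x x.2) ∈ nhds f :=
    (Filter.biInter_finset_mem t).2 fun x _ => hu x x.2
  refine Filter.mem_of_superset hmem ?_
  intro g hg x hx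
  have := ht hx
  simp only [Set.mem_iUnion] at this
  obtain ⟨y, hyt, hyw⟩ := this
  have hgu : g ∈ u y y.2 := by
    have := Set.mem_iInter₂.1 hg y hyt
    exact this
  exact hvw y y.2 g hgu x hyw
end

section
/- For subsets S, T of a topological space X, define S ≪ T (S is way below, or compact relative to, T) iff every open cover of T has a finite subcollection covering S. Then S ≪ T holds if and only if for every topological space Z, every point z ∈ Z, and every open W ⊆ Z × X with {z} × T ⊆ W, there is a neighbourhood V of z with V × S ⊆ W. -/
universe u

/-- `S` is way below (compact relative to) `T`: every family of open sets whose union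
contains `T` has a finite subfamily whose union contains `S`. -/
def WayBelow {X : Type u} [TopologicalSpace X] (S T : Set X) : Prop :=
  ∀ 𝒰 : Set (Set X), (∀ U ∈ 𝒰, IsOpen U) → T ⊆ ⋃₀ 𝒰 →
    ∃ 𝒱 ⊆ 𝒰, 𝒱.Finite ∧ S ⊆ ⋃₀ 𝒱

theorem stmt17 {X : Type u} [TopologicalSpace X] (S T : Set X) :
    WayBelow S T ↔
      ∀ (Z : Type u) [TopologicalSpace Z] (z : Z) (W : Set (Z × X)), IsOpen W →
        ({z} ×ˢ T ⊆ W) → ∃ V ∈ nhds z, V ×ˢ S ⊆ W := by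
  classical
  constructor
  · intro h Z _ z W hW hzT
    set 𝒰 : Set (Set X) := {U | IsOpen U ∧ ∃ V : Set Z, IsOpen V ∧ z ∈ V ∧ V ×ˢ U ⊆ W}
      with h𝒰def
    have hcov : T ⊆ ⋃₀ 𝒰 := by
      intro x hx
      have hzx : (z, x) ∈ W := hzT ⟨rfl, hx⟩
      rcases isOpen_prod_iff.1 hW z x hzx with ⟨V, U, hV, hU, hzV, hxU, hVU⟩
      exact ⟨U, ⟨hU, V, hV, hzV, hVU⟩, hxU⟩
    rcases h 𝒰 (fun U hU => hU.1) hcov with ⟨𝒱, h𝒱𝒰, h𝒱fin, hS𝒱⟩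
    -- choose a neighborhood of z for each U ∈ 𝒱
    let vU : Set X → Set Z := fun U =>
      if hU : U ∈ 𝒰 then hU.2.choose else Set.univ
    have hvU : ∀ U ∈ 𝒰, IsOpen (vU U) ∧ z ∈ vU U ∧ (vU U) ×ˢ U ⊆ W := by
      intro U hU
      simp only [vU, dif_pos hU]
      exact ⟨hU.2.choose_spec.1, hU.2.choose_spec.2.1, hU.2.choose_spec.2.2⟩
    refine ⟨⋂ U ∈ 𝒱, vU U, ?_, ?_⟩
    · refine IsOpen.mem_nhds ?_ ?_
      · exact h𝒱fin.isOpen_biInter fun U hU => (hvU U (h𝒱𝒰 hU)).1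
      · exact Set.mem_iInter₂.2 fun U hU => (hvU U (h𝒱𝒰 hU)).2.1
    · rintro ⟨v, x⟩ ⟨hv, hx⟩
      rcases hS𝒱 hx with ⟨U, hU𝒱, hxU⟩
      exact (hvU U (h𝒱𝒰 hU𝒱)).2.2 ⟨Set.mem_iInter₂.1 hv U hU𝒱, hxU⟩
  · intro h 𝒰 h𝒰open hT
    let g : Set (Set (Set (Set X))) := {O | ∃ U ∈ 𝒰, O = {A | U ∈ A}}
    letI : TopologicalSpace (Set (Set X)) := TopologicalSpace.generateFrom g
    let W : Set (Set (Set X) × X) := {p | ∃ U ∈ 𝒰, U ∈ p.1 ∧ p.2 ∈ U}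
    have hWopen : IsOpen W := by
      rw [isOpen_prod_iff]
      rintro A x ⟨U, hU𝒰, hUA, hxU⟩
      exact ⟨{B | U ∈ B}, U,
        TopologicalSpace.isOpen_generateFrom_of_mem ⟨U, hU𝒰, rfl⟩,
        h𝒰open U hU𝒰, hUA, hxU,
        fun p hp => ⟨U, hU𝒰, hp.1, hp.2⟩⟩
    have hzT : ({𝒰} ×ˢ T : Set (Set (Set X) × X)) ⊆ W := by
      rintro ⟨A, x⟩ ⟨hA, hx⟩
      rcases hT hx with ⟨U, hU, hxU⟩
      exact ⟨U, hU, by simp only [Set.mem_singleton_iff] at hA; rw [hA]; exact hU, hxU⟩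
    rcases h (Set (Set X)) 𝒰 W hWopen hzT with ⟨V, hVnhds, hVS⟩
    have hbasis := TopologicalSpace.isTopologicalBasis_of_subbasis
      (rfl : (inferInstance : TopologicalSpace (Set (Set X))) = TopologicalSpace.generateFrom g)
    rcases hbasis.mem_nhds_iff.1 hVnhds with ⟨t, ht, h𝒰t, htV⟩
    obtain ⟨F, ⟨hFfin, hFg⟩, rfl⟩ := ht
    set 𝒱 : Set (Set X) := {U | U ∈ 𝒰 ∧ {A : Set (Set X) | U ∈ A} ∈ F} with h𝒱def
    have hinj : Function.Injective (fun U : Set X => {A : Set (Set X) | U ∈ A}) := by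
      intro U U' hEq
      have hEq' : {A : Set (Set X) | U ∈ A} = {A : Set (Set X) | U' ∈ A} := hEq
      have h1 : ({U} : Set (Set X)) ∈ {A : Set (Set X) | U ∈ A} := rfl
      rw [hEq'] at h1
      exact h1.symm
    have h𝒱fin : 𝒱.Finite := by
      refine (hFfin.preimage (hinj.injOn)).subset ?_
      intro U hU
      exact hU.2
    refine ⟨𝒱, fun U hU => hU.1, h𝒱fin, ?_⟩
    have h𝒱t : 𝒱 ∈ ⋂₀ F := by
      intro O hOF
      rcases hFg hOF with ⟨U, hU𝒰, rfl⟩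
      exact ⟨hU𝒰, hOF⟩
    intro x hx
    rcases hVS (show (𝒱, x) ∈ V ×ˢ S from ⟨htV h𝒱t, hx⟩) with ⟨U, hU𝒰, hU𝒱, hxU⟩
    exact ⟨U, hU𝒱, hxU⟩
end
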